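/- For each d ≥ 1, the complex consisting of the (d-1)-skeleton of the simplex on vertex set {1,...,d+2} together with the d-face {1,...,d+1} is a d-dimensional obstruction to purity: it is not pure, but every proper induced subcomplex is pure. -/

import Mathlib

open Finset

variable {V : Type*} [DecidableEq V]

/-- A (finite abstract) simplicial complex: a finset of finsets closed under subsets. -/
def IsComplex (K : Finset (Finset V)) : Prop :=
  ∀ F ∈ K, ∀ G ⊆ F, G ∈ K

/-- The facets (maximal faces) of a complex. -/
def facets (K : Finset (Finset V)) : Finset (Finset V) := by
  classical exact K.filter (fun F => ∀ G ∈ K, F ⊆ G → F = G)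

/-- `L` is a shelling order of the facets of `K`: for each `i ≥ 2` (0-indexed `i ≥ 1`),
the intersection of the closed simplex on `F_i` with the union of the previous closed simplices
is pure of dimension `dim F_i - 1`: every face `G` of the intersection is contained in a face `H`
of the intersection with `H.card = F_i.card - 1`. -/
def IsShelling (K : Finset (Finset V)) (L : List (Finset V)) : Prop :=
  L.Nodup ∧ L.toFinset = facets K ∧
  ∀ i : Fin L.length, i.1 ≠ 0 → ∀ G ⊆ L.get i,
    (∃ j : Fin L.length, j < i ∧ G ⊆ L.get j) →
    ∃ H, G ⊆ H ∧ H ⊆ L.get i ∧ H.card + 1 = (L.get i).card ∧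
      ∃ j : Fin L.length, j < i ∧ H ⊆ L.get j

/-- A complex is shellable if it admits a shelling order of its facets. -/
def Shellable (K : Finset (Finset V)) : Prop := ∃ L, IsShelling K L

/-- The subcomplex of `K` induced by a vertex subset `U`. -/
def inducedSub (K : Finset (Finset V)) (U : Finset V) : Finset (Finset V) :=
  K.filter (fun F => F ⊆ U)

/-- The vertex set of a complex. -/
def verts (K : Finset (Finset V)) : Finset V := K.sup id

/-- The link of a vertex `v` in `K`. -/
def link (K : Finset (Finset V)) (v : V) : Finset (Finset V) :=
  K.filter (fun F => v ∉ F ∧ insert v F ∈ K)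

/-- A complex is pure if all of its facets have the same dimension. -/
def IsPure (K : Finset (Finset V)) : Prop :=
  ∀ F ∈ facets K, ∀ G ∈ facets K, F.card = G.card

/-- The `(d-1)`-skeleton of the simplex on vertex set `{1, ..., n}` (in `ℕ`):
all subsets of cardinality at most `d`. -/
def skel (n d : ℕ) : Finset (Finset ℕ) :=
  (Finset.Icc 1 n).powerset.filter (fun F => F.card ≤ d)

/-- For `d ≥ 1`, the `(d-1)`-skeleton of the simplex on `{1, ..., d+2}` together with the
`d`-face `{1, ..., d+1}` is a `d`-dimensional obstruction to purity: it is not pure, but every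
proper induced subcomplex of it is pure. -/
theorem stmt13 (d : ℕ) (hd : 1 ≤ d) :
    ¬ IsPure (skel (d + 2) d ∪ {Finset.Icc 1 (d + 1)}) ∧
      ∀ U ⊂ verts (skel (d + 2) d ∪ {Finset.Icc 1 (d + 1)}),
        IsPure (inducedSub (skel (d + 2) d ∪ {Finset.Icc 1 (d + 1)}) U) := by
  classical
  set F0 : Finset ℕ := Finset.Icc 1 (d + 1) with hF0def
  set K : Finset (Finset ℕ) := skel (d + 2) d ∪ {F0} with hKdef
  have hmemK : ∀ F : Finset ℕ,
      F ∈ K ↔ (F ⊆ Finset.Icc 1 (d + 2) ∧ F.card ≤ d) ∨ F = F0 := by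
    intro F
    simp [hKdef, skel, Finset.mem_union, Finset.mem_filter, Finset.mem_powerset,
      and_comm]
    exact or_comm
  have hfacets : ∀ (K' : Finset (Finset ℕ)) (F : Finset ℕ),
      F ∈ facets K' ↔ F ∈ K' ∧ ∀ G ∈ K', F ⊆ G → F = G := by
    intro K' F; simp [facets]
  have hcardF0 : F0.card = d + 1 := by simp [hF0def]
  have hF0sub : F0 ⊆ Finset.Icc 1 (d + 2) := by
    apply Finset.Icc_subset_Icc_right; omega
  have hd2F0 : d + 2 ∉ F0 := by simp [hF0def]
  -- F0 is a facet of K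
  have hfac0 : F0 ∈ facets K := by
    rw [hfacets]
    refine ⟨(hmemK F0).2 (Or.inr rfl), ?_⟩
    intro G hG hsub
    rcases (hmemK G).1 hG with ⟨_, hc⟩ | h
    · have := Finset.card_le_card hsub
      omega
    · exact h.symm
  -- the second facet
  set F1 : Finset ℕ := Finset.Icc 3 (d + 2) with hF1def
  have hcardF1 : F1.card = d := by simp [hF1def]
  have hfac1 : F1 ∈ facets K := by
    rw [hfacets]
    constructor
    · refine (hmemK F1).2 (Or.inl ⟨?_, by omega⟩)
      apply Finset.Icc_subset_Icc_left; omega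
    · intro G hG hsub
      rcases (hmemK G).1 hG with ⟨_, hc⟩ | h
      · exact Finset.eq_of_subset_of_card_le hsub (by omega)
      · exfalso
        apply hd2F0
        apply h ▸ hsub
        simp [hF1def]; omega
  constructor
  · intro hpure
    have := hpure F0 hfac0 F1 hfac1
    omega
  · -- verts K = Icc 1 (d+2)
    have hverts : verts K = Finset.Icc 1 (d + 2) := by
      ext v
      simp only [verts, Finset.mem_sup, id]
      constructor
      · rintro ⟨F, hF, hv⟩
        rcases (hmemK F).1 hF with ⟨hs, _⟩ | h
        · exact hs hv
        · exact hF0sub (h ▸ hv)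
      · intro hv
        refine ⟨{v}, (hmemK _).2 (Or.inl ⟨by simpa using hv, by simp; omega⟩), by simp⟩
    intro U hU
    rw [hverts] at hU
    have hUsub : U ⊆ Finset.Icc 1 (d + 2) := hU.subset
    have hUcard : U.card < d + 2 := by
      have := Finset.card_lt_card hU
      simpa using this
    have hmemKU : ∀ F : Finset ℕ, F ∈ inducedSub K U ↔ F ∈ K ∧ F ⊆ U := by
      intro F; simp [inducedSub]
    by_cases hcase : F0 ⊆ U
    · -- then U = F0 and the induced complex has unique facet U
      have hUeq : U = F0 := by
        refine (Finset.eq_of_subset_of_card_le hcase (by omega)).symm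
      have hUmem : U ∈ inducedSub K U :=
        (hmemKU U).2 ⟨(hmemK U).2 (Or.inr hUeq), Finset.Subset.refl U⟩
      have hkey : ∀ F ∈ facets (inducedSub K U), F = U := by
        intro F hF
        rw [hfacets] at hF
        exact hF.2 U hUmem ((hmemKU F).1 hF.1).2
      intro F hF G hG
      rw [hkey F hF, hkey G hG]
    · -- all facets have cardinality min U.card d
      have hkey : ∀ F ∈ facets (inducedSub K U), F.card = min U.card d := by
        intro F hF
        rw [hfacets] at hF
        obtain ⟨hFmem, hmax⟩ := hF
        obtain ⟨hFK, hFU⟩ := (hmemKU F).1 hFmem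
        have hFsk : F ⊆ Finset.Icc 1 (d + 2) ∧ F.card ≤ d := by
          rcases (hmemK F).1 hFK with h | h
          · exact h
          · exact absurd (h ▸ hFU) hcase
        have hle : F.card ≤ min U.card d :=
          le_min (Finset.card_le_card hFU) hFsk.2
        rcases eq_or_lt_of_le hle with h | h
        · exact h
        · exfalso
          have hFneU : F ≠ U := by
            intro h'; subst h'
            omega
          have hss : F ⊂ U := hFU.ssubset_of_ne hFneU
          obtain ⟨v, hvU, hvF⟩ := Finset.exists_of_ssubset hss
          have hGmem : insert v F ∈ inducedSub K U := by
            refine (hmemKU _).2 ⟨(hmemK _).2 (Or.inl ⟨?_, ?_⟩), ?_⟩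
            · exact (Finset.insert_subset (hUsub hvU) hFsk.1)
            · rw [Finset.card_insert_of_notMem hvF]
              omega
            · exact Finset.insert_subset hvU hFU
          have := hmax _ hGmem (Finset.subset_insert v F)
          exact hvF (this ▸ Finset.mem_insert_self v F)
      intro F hF G hG
      rw [hkey F hF, hkey G hG]
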